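/- arXiv:1001.3599 — 7 statements merged into one kernel-verified Lean document; each statement's English description precedes it below -/
import Mathlib

section
/- Let C be a nontrivial finite cyclic group acting fixed-point-freely on a nontrivial finite cyclic group K (every nonidentity element of C fixes only the identity of K). Then every prime divisor of |C| is strictly smaller than every prime divisor of |K|. -/
/-!
Pick `c ∈ C` of prime order `q` and `k ∈ K` of prime order `p`. Every endomorphism of the
cyclic group `K` is a power map, so `φ c` is `x ↦ x ^ m` for some integer `m`. Since `c ^ q = 1`,
`k ^ (m ^ q) = k`, while fixed-point-freeness gives `k ^ m ≠ k`; in `ZMod p` this says that `m`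
has multiplicative order exactly `q`, so `q ∣ p - 1` by Fermat's little theorem.
-/

lemma MulAut.pow_apply_eq_zpow_pow {G : Type*} [Group G] {σ : MulAut G} {m : ℤ}
    (hσ : ∀ g, σ g = g ^ m) (n : ℕ) (g : G) : (σ ^ n) g = g ^ (m ^ n) := by
  induction n with
  | zero => simp
  | succ n ih => rw [pow_succ', MulAut.mul_apply, ih, hσ, ← zpow_mul, ← pow_succ]

lemma dvd_sub_one_of_zpow_pow_eq_self {G : Type*} [Group G] {k : G} {p q : ℕ} [Fact p.Prime]
    (hq : q.Prime) (hk : orderOf k = p) {m : ℤ} (hfix : k ^ (m ^ q) = k) (hmove : k ^ m ≠ k) :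
    q ∣ p - 1 := by
  have : Fact q.Prime := ⟨hq⟩
  have zpow_eq_iff (a b : ℤ) : k ^ a = k ^ b ↔ (a : ZMod p) = b := by
    rw [zpow_eq_zpow_iff_modEq, hk, ZMod.intCast_eq_intCast_iff]
  have hpow : (m : ZMod p) ^ q = 1 := by
    exact_mod_cast (zpow_eq_iff (m ^ q) 1).1 (by rwa [zpow_one])
  have hne : (m : ZMod p) ≠ 1 := by
    rw [Ne, ← Int.cast_one, ← zpow_eq_iff, zpow_one]
    exact hmove
  rw [← orderOf_eq_prime hpow hne]
  exact ZMod.orderOf_dvd_card_sub_one fun h ↦ by simp [h, hq.ne_zero] at hpow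

theorem stmt1_general {C K : Type*} [Group C] [Group K] [Finite C] [Finite K]
    [IsCyclic K]
    (φ : C →* MulAut K)
    (hfrob : ∀ c : C, c ≠ 1 → ∀ k : K, k ≠ 1 → φ c k ≠ k)
    (q p : ℕ) (hq : q.Prime) (hp : p.Prime)
    (hqC : q ∣ Nat.card C) (hpK : p ∣ Nat.card K) :
    q < p := by
  have : Fact q.Prime := ⟨hq⟩
  have : Fact p.Prime := ⟨hp⟩
  obtain ⟨c, hc⟩ := exists_prime_orderOf_dvd_card' q hqC
  obtain ⟨k, hk⟩ := exists_prime_orderOf_dvd_card' p hpK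
  have hc1 : c ≠ 1 := by rintro rfl; exact hq.ne_one (orderOf_one (G := C) ▸ hc).symm
  have hk1 : k ≠ 1 := by rintro rfl; exact hp.ne_one (orderOf_one (G := K) ▸ hk).symm
  obtain ⟨m, hm⟩ := (φ c).toMonoidHom.map_cyclic
  have hfix : k ^ (m ^ q) = k := by
    rw [← MulAut.pow_apply_eq_zpow_pow hm, ← map_pow, ← hc, pow_orderOf_eq_one, map_one]
    rfl
  have hmove : k ^ m ≠ k := hm k ▸ hfrob c hc1 k hk1
  have hdvd := dvd_sub_one_of_zpow_pow_eq_self hq hk hfix hmove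
  exact (Nat.le_of_dvd (Nat.sub_pos_of_lt hp.one_lt) hdvd).trans_lt (Nat.sub_one_lt hp.ne_zero)

theorem stmt1 {C K : Type*} [Group C] [Group K] [Finite C] [Finite K]
    [IsCyclic C] [IsCyclic K] [Nontrivial C] [Nontrivial K]
    (φ : C →* MulAut K)
    (hfrob : ∀ c : C, c ≠ 1 → ∀ k : K, k ≠ 1 → φ c k ≠ k)
    (q p : ℕ) (hq : q.Prime) (hp : p.Prime)
    (hqC : q ∣ Nat.card C) (hpK : p ∣ Nat.card K) :
    q < p :=
  stmt1_general φ hfrob q p hq hp hqC hpK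
end

section
/- Let F = C ⋉ K be a finite Frobenius group with cyclic complement C and cyclic kernel K. Let C₁ ≤ C, K₁ ≤ K, and f ∈ F. Then C₁^f K₁ ∩ K = K₁, and C₁^f K₁ ∩ C equals C₁ if f ∈ C K₁ and equals the trivial group if f ∉ C K₁. -/
open Pointwise

private lemma aux_mem_of_pow {F : Type*} [Group F] [Finite F] (K K₁ : Subgroup F)
    (hKcyc : IsCyclic ↥K) (hK₁ : K₁ ≤ K) {x : F} (hx : x ∈ K)
    (hpow : x ^ Nat.card ↥K₁ = 1) : x ∈ K₁ := by
  classical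
  haveI : Fintype ↥K := Fintype.ofFinite _
  haveI := hKcyc
  set n := Nat.card ↥K₁ with hn
  have hn0 : 0 < n := Nat.card_pos
  have hcardK₁ : Nat.card ↥(K₁.subgroupOf K) = n := by
    rw [hn]; exact Nat.card_congr (Subgroup.subgroupOfEquivOfLe hK₁).toEquiv
  set T : Set ↥K := {a : ↥K | a ^ n = 1} with hT
  have hTfin : T.Finite := Set.toFinite _
  have hTcard : T.ncard ≤ n := by
    have := IsCyclic.card_pow_eq_one_le (α := ↥K) hn0
    calc T.ncard = (Finset.univ.filter fun a : ↥K => a ^ n = 1).card := by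
          rw [Set.ncard_eq_toFinset_card']
          congr 1
          ext a
          simp [hT]
      _ ≤ n := this
  have hsub : ((K₁.subgroupOf K : Subgroup ↥K) : Set ↥K) ⊆ T := by
    intro a ha
    have h1 : (⟨a, ha⟩ : K₁.subgroupOf K) ^ n = 1 := by
      rw [← hcardK₁]; exact pow_card_eq_one'
    have := congrArg Subtype.val h1
    simpa [hT] using this
  have hscard : ((K₁.subgroupOf K : Subgroup ↥K) : Set ↥K).ncard = n := by
    rw [← Nat.card_coe_set_eq, SetLike.coe_sort_coe, hcardK₁]
  have heq : ((K₁.subgroupOf K : Subgroup ↥K) : Set ↥K) = T :=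
    Set.eq_of_subset_of_ncard_le hsub (by omega) hTfin
  have hxT : (⟨x, hx⟩ : ↥K) ∈ T := by
    simp only [hT, Set.mem_setOf_eq]
    ext
    simpa using hpow
  rw [← heq] at hxT
  exact hxT

theorem stmt4 {F : Type*} [Group F] [Finite F] (C K : Subgroup F)
    [K.Normal] (hCcyc : IsCyclic ↥C) (hKcyc : IsCyclic ↥K)
    (hCnt : C ≠ ⊥) (hKnt : K ≠ ⊥) (hdisj : C ⊓ K = ⊥) (hsup : C ⊔ K = ⊤)
    (hfrob : ∀ c ∈ C, c ≠ 1 → ∀ k ∈ K, k ≠ 1 → c * k * c⁻¹ ≠ k)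
    (C₁ K₁ : Subgroup F) (hC₁ : C₁ ≤ C) (hK₁ : K₁ ≤ K) (f : F) :
    ((((fun c => f⁻¹ * c * f) '' (C₁ : Set F)) * (K₁ : Set F)) ∩ (K : Set F)
        = (K₁ : Set F)) ∧
    (f ∈ (C : Set F) * (K₁ : Set F) →
      (((fun c => f⁻¹ * c * f) '' (C₁ : Set F)) * (K₁ : Set F)) ∩ (C : Set F)
        = (C₁ : Set F)) ∧
    (f ∉ (C : Set F) * (K₁ : Set F) →
      (((fun c => f⁻¹ * c * f) '' (C₁ : Set F)) * (K₁ : Set F)) ∩ (C : Set F)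
        = {1}) := by
  classical
  have hCcomm : ∀ a ∈ C, ∀ b ∈ C, a * b = b * a := by
    letI := hCcyc.commGroup
    intro a ha b hb
    have : (⟨a, ha⟩ * ⟨b, hb⟩ : C) = ⟨b, hb⟩ * ⟨a, ha⟩ := mul_comm _ _
    exact congrArg Subtype.val this
  have hdisj' : ∀ x : F, x ∈ C → x ∈ K → x = 1 := by
    intro x hc hk
    have : x ∈ C ⊓ K := ⟨hc, hk⟩
    rw [hdisj] at this
    exact this
  have hdecomp : ∀ g : F, ∃ c ∈ C, ∃ k ∈ K, g = c * k := by
    intro g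
    have hg : g ∈ (C : Set F) * (K : Set F) := by
      rw [← Subgroup.mul_normal, hsup]
      exact Subgroup.mem_top g
    rw [Set.mem_mul] at hg
    obtain ⟨c, hc, k, hk, hck⟩ := hg
    exact ⟨c, hc, k, hk, hck.symm⟩
  have hchar : ∀ g x : F, x ∈ K₁ → g⁻¹ * x * g ∈ K₁ := by
    intro g x hx
    apply aux_mem_of_pow K K₁ hKcyc hK₁
    · simpa using (‹K.Normal›.conj_mem x (hK₁ hx) g⁻¹)
    · have hx1 : x ^ Nat.card ↥K₁ = 1 := by
        have h1 : (⟨x, hx⟩ : K₁) ^ Nat.card ↥K₁ = 1 := pow_card_eq_one'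
        have h2 := congrArg Subtype.val h1
        push_cast at h2
        exact h2
      have : (g⁻¹ * x * g) ^ Nat.card ↥K₁ = g⁻¹ * x ^ Nat.card ↥K₁ * g := by
        have := map_pow (MulAut.conj g⁻¹) x (Nat.card ↥K₁)
        simpa [MulAut.conj_apply, mul_assoc] using this.symm
      rw [this, hx1]
      group
  have hφinj : ∀ c ∈ C, c ≠ 1 → ∀ y ∈ K, ∀ z ∈ K,
      y⁻¹ * (c⁻¹ * y * c) = z⁻¹ * (c⁻¹ * z * c) → y = z := by
    intro c hc hc1 y hy z hz heq
    by_contra hne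
    have hk : y * z⁻¹ ∈ K := mul_mem hy (inv_mem hz)
    have hk1 : y * z⁻¹ ≠ 1 := fun h => hne (by
      have := mul_inv_eq_one.mp h; exact this)
    have h2 : c⁻¹ * y * c = y * (z⁻¹ * (c⁻¹ * z * c)) := by
      rw [← heq]; group
    have hfix : c⁻¹ * (y * z⁻¹) * (c⁻¹)⁻¹ = y * z⁻¹ := by
      calc c⁻¹ * (y * z⁻¹) * (c⁻¹)⁻¹ = (c⁻¹ * y * c) * (c⁻¹ * z * c)⁻¹ := by group
        _ = y * (z⁻¹ * (c⁻¹ * z * c)) * (c⁻¹ * z * c)⁻¹ := by rw [h2]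
        _ = y * z⁻¹ := by group
    exact hfrob c⁻¹ (inv_mem hc) (by simpa using hc1) (y * z⁻¹) hk hk1 hfix
  obtain ⟨c₀, hc₀, k₀, hk₀, hf⟩ := hdecomp f
  have hconj : ∀ c ∈ C, f⁻¹ * c * f = k₀⁻¹ * c * k₀ := by
    intro c hc
    have h1 : c₀⁻¹ * c * c₀ = c := by
      rw [mul_assoc, ← hCcomm c₀ hc₀ c hc, inv_mul_cancel_left]
    calc f⁻¹ * c * f = k₀⁻¹ * (c₀⁻¹ * c * c₀) * k₀ := by rw [hf]; group
      _ = k₀⁻¹ * c * k₀ := by rw [h1]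
  refine ⟨?_, ?_, ?_⟩
  · -- part 1
    ext x
    constructor
    · rintro ⟨hxS, hxK⟩
      rw [Set.mem_mul] at hxS
      obtain ⟨a, ha, k, hk, hak⟩ := hxS
      obtain ⟨c, hc, rfl⟩ := ha
      simp only [] at hak
      have hcf := hconj c (hC₁ hc)
      have hmemK : k₀⁻¹ * c * k₀ ∈ K := by
        have : k₀⁻¹ * c * k₀ = x * k⁻¹ := by
          rw [← hak, hcf]; group
        rw [this]
        exact mul_mem hxK (inv_mem (hK₁ hk))
      have hcK : c ∈ K := by
        have : c = k₀ * (k₀⁻¹ * c * k₀) * k₀⁻¹ := by group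
        rw [this]
        exact ‹K.Normal›.conj_mem _ hmemK k₀
      have hc1 : c = 1 := hdisj' c (hC₁ hc) hcK
      have : x = k := by rw [← hak, hc1]; group
      rw [this]; exact hk
    · intro hx
      refine ⟨?_, hK₁ hx⟩
      rw [Set.mem_mul]
      refine ⟨f⁻¹ * 1 * f, ⟨1, one_mem C₁, rfl⟩, x, hx, by group⟩
  · -- part 2
    intro hfmem
    rw [Set.mem_mul] at hfmem
    obtain ⟨c', hc', k₁, hk₁, hck₁⟩ := hfmem
    have hk₀K₁ : k₀ ∈ K₁ := by
      have h1 : c'⁻¹ * c₀ = k₁ * k₀⁻¹ := by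
        have : c' * k₁ = c₀ * k₀ := by rw [hck₁, hf]
        calc c'⁻¹ * c₀ = c'⁻¹ * (c₀ * k₀) * k₀⁻¹ := by group
          _ = c'⁻¹ * (c' * k₁) * k₀⁻¹ := by rw [this]
          _ = k₁ * k₀⁻¹ := by group
      have h2 : c'⁻¹ * c₀ = 1 :=
        hdisj' _ (mul_mem (inv_mem hc') hc₀) (h1 ▸ mul_mem (hK₁ hk₁) (inv_mem hk₀))
      have h3 : k₁ * k₀⁻¹ = 1 := h1 ▸ h2
      have : k₀ = k₁ := by
        have := mul_inv_eq_one.mp h3; exact this.symm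
      rw [this]; exact hk₁
    ext x
    constructor
    · rintro ⟨hxS, hxC⟩
      rw [Set.mem_mul] at hxS
      obtain ⟨a, ha, k, hk, hak⟩ := hxS
      obtain ⟨c, hc, rfl⟩ := ha
      simp only [] at hak
      have hcf := hconj c (hC₁ hc)
      have hcx : c⁻¹ * x ∈ K := by
        have : c⁻¹ * x = (c⁻¹ * k₀⁻¹ * c) * (k₀ * k) := by
          rw [← hak, hcf]; group
        rw [this]
        refine mul_mem ?_ (mul_mem hk₀ (hK₁ hk))
        have : c⁻¹ * k₀⁻¹ * c = c⁻¹ * k₀⁻¹ * (c⁻¹)⁻¹ := by group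
        rw [this]
        exact ‹K.Normal›.conj_mem _ (inv_mem hk₀) c⁻¹
      have hcxC : c⁻¹ * x ∈ C := mul_mem (inv_mem (hC₁ hc)) hxC
      have h1 : c⁻¹ * x = 1 := hdisj' _ hcxC hcx
      have : x = c := by
        have := inv_mul_eq_one.mp h1; exact this.symm
      rw [this]; exact hc
    · intro hx
      refine ⟨?_, hC₁ hx⟩
      rw [Set.mem_mul]
      refine ⟨f⁻¹ * x * f, ⟨x, hx, rfl⟩, k₀⁻¹ * x⁻¹ * k₀ * x, ?_, ?_⟩
      · have : k₀⁻¹ * x⁻¹ * k₀ * x = k₀⁻¹ * (x⁻¹ * k₀ * x) := by group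
        rw [this]
        exact mul_mem (inv_mem hk₀K₁) (hchar x k₀ hk₀K₁)
      · rw [hconj x (hC₁ hx)]; group
  · -- part 3
    intro hfnmem
    ext x
    simp only [Set.mem_singleton_iff]
    constructor
    · rintro ⟨hxS, hxC⟩
      rw [Set.mem_mul] at hxS
      obtain ⟨a, ha, k, hk, hak⟩ := hxS
      obtain ⟨c, hc, rfl⟩ := ha
      simp only [] at hak
      have hcf := hconj c (hC₁ hc)
      have hcxK : c⁻¹ * x ∈ K := by
        have : c⁻¹ * x = (c⁻¹ * k₀⁻¹ * c) * (k₀ * k) := by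
          rw [← hak, hcf]; group
        rw [this]
        refine mul_mem ?_ (mul_mem hk₀ (hK₁ hk))
        have : c⁻¹ * k₀⁻¹ * c = c⁻¹ * k₀⁻¹ * (c⁻¹)⁻¹ := by group
        rw [this]
        exact ‹K.Normal›.conj_mem _ (inv_mem hk₀) c⁻¹
      have h1 : c⁻¹ * x = 1 :=
        hdisj' _ (mul_mem (inv_mem (hC₁ hc)) hxC) hcxK
      have hxc : x = c := by
        have := inv_mul_eq_one.mp h1; exact this.symm
      by_cases hc1 : c = 1
      · rw [hxc, hc1]
      · exfalso
        -- k = φ(k₀) ∈ K₁ with φ(y) = y⁻¹ * (c⁻¹ * y * c)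
        have hkeq : k = k₀⁻¹ * (c⁻¹ * k₀ * c) := by
          have h2 : (k₀⁻¹ * c * k₀) * k = c := by rw [← hcf, hak, hxc]
          calc k = (k₀⁻¹ * c * k₀)⁻¹ * ((k₀⁻¹ * c * k₀) * k) := by group
            _ = (k₀⁻¹ * c * k₀)⁻¹ * c := by rw [h2]
            _ = k₀⁻¹ * (c⁻¹ * k₀ * c) := by group
        have hφk₀ : k₀⁻¹ * (c⁻¹ * k₀ * c) ∈ K₁ := hkeq ▸ hk
        -- ψ : K₁ → K₁ is injective hence surjective
        haveI : Finite ↥K₁ := Subtype.finite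
        set ψ : ↥K₁ → ↥K₁ := fun y =>
          ⟨(y : F)⁻¹ * (c⁻¹ * (y : F) * c),
            mul_mem (inv_mem y.2) (hchar c (y : F) y.2)⟩ with hψ
        have hinj : Function.Injective ψ := by
          intro y z hyz
          have := congrArg Subtype.val hyz
          simp only [hψ] at this
          exact Subtype.ext (hφinj c (hC₁ hc) hc1 _ (hK₁ y.2) _ (hK₁ z.2) this)
        have hsurj : Function.Surjective ψ := Finite.surjective_of_injective hinj
        obtain ⟨⟨k₁, hk₁'⟩, hψk⟩ := hsurj ⟨_, hφk₀⟩
        have hval : k₁⁻¹ * (c⁻¹ * k₁ * c) = k₀⁻¹ * (c⁻¹ * k₀ * c) :=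
          congrArg Subtype.val hψk
        have hk₀k₁ : k₁ = k₀ := hφinj c (hC₁ hc) hc1 _ (hK₁ hk₁') _ hk₀ hval
        have hk₀K₁ : k₀ ∈ K₁ := hk₀k₁ ▸ hk₁'
        exact hfnmem (Set.mem_mul.mpr ⟨c₀, hc₀, k₀, hk₀K₁, hf.symm⟩)
    · intro hx1
      rw [hx1]
      refine ⟨?_, one_mem C⟩
      rw [Set.mem_mul]
      exact ⟨f⁻¹ * 1 * f, ⟨1, one_mem C₁, rfl⟩, 1, one_mem K₁, by group⟩
end

section
/- Let F = CK be a finite Frobenius group with cyclic complement C and cyclic kernel K, acting transitively on a finite set Δ. Suppose L ∈ Δ has F-stabilizer equal to C₁K₁ with C₁ ≤ C and K₁ ≤ K. Then the C-stabilizer of every point in the C-orbit of L is C₁, and every point of Δ outside the C-orbit of L has trivial C-stabilizer. -/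
/-!
Let `S = C₁K₁` be the stabilizer of `L`. Factorizations `c * k` with `c ∈ C`, `k ∈ K` are unique,
so `S ⊓ C = C₁` and `S ⊓ K = K₁`; as `C` is abelian, `C`-stabilizers are constant on `C`-orbits.
Every point is `(c * k) • L`. If `1 ≠ s ∈ C` fixes `k • L`, then `k⁻¹ * s * k = s * ⁅s⁻¹, k⁻¹⁆ ∈ S`
forces `s ∈ C₁` and `⁅s⁻¹, k⁻¹⁆ ∈ K₁`. Conjugation by `s⁻¹` is a fixed-point-free automorphism of
`K` preserving `K₁`, so its commutator map is injective on `K` and onto on the finite group `K₁`;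
hence `k ∈ K₁`, i.e. `k • L = L`.
-/

open Pointwise MulAction
open scoped commutatorElement

namespace MonoidHom.FixedPointFree

variable {G : Type*} [Group G] {φ : G →* G}

theorem mem_of_commutatorMap_mem (hφ : FixedPointFree φ) {H : Subgroup G} [Finite H]
    (hH : Set.MapsTo φ H H) {g : G} (hg : commutatorMap φ g ∈ H) : g ∈ H := by
  let ψ : H →* H := (φ.domRestrict H).codRestrict H fun h ↦ hH h.2
  have hψ : FixedPointFree ψ := fun h hh ↦ Subtype.ext (hφ h (congrArg Subtype.val hh))
  obtain ⟨h, hh⟩ := hψ.commutatorMap_surjective ⟨_, hg⟩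
  have : commutatorMap φ h = commutatorMap φ g := congrArg Subtype.val hh
  exact hφ.commutatorMap_injective this ▸ h.2

end MonoidHom.FixedPointFree

namespace Subgroup

variable {G : Type*} [Group G]

theorem mem_of_commutatorElement_mem [Finite G] {K H : Subgroup G} [K.Normal] {s : G}
    (hs : ∀ k ∈ K, s * k * s⁻¹ = k → k = 1) (hsH : ∀ h ∈ H, s * h * s⁻¹ ∈ H)
    {k : G} (hk : k ∈ K) (h : ⁅s, k⁆ ∈ H) : k ∈ H := by
  have hφ : MonoidHom.FixedPointFree (MulAut.conjNormal (H := K) s).toMonoidHom :=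
    fun k hk' ↦ Subtype.ext (hs k k.2 (by simpa [Subtype.ext_iff] using hk'))
  refine mem_subgroupOf.mp (hφ.mem_of_commutatorMap_mem (g := ⟨k, hk⟩) (fun x hx ↦ ?_) ?_)
  · simpa [mem_subgroupOf, MulAut.conjNormal_apply] using hsH x hx
  · have h' := H.inv_mem h
    rw [commutatorElement_inv] at h'
    simpa [mem_subgroupOf, MulAut.conjNormal_apply, commutatorElement_def, div_eq_mul_inv,
      mul_assoc] using h'

section Factorization

variable {C K C₁ K₁ : Subgroup G} (hCK : Disjoint C K) (hC₁ : C₁ ≤ C) (hK₁ : K₁ ≤ K)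
include hCK hC₁ hK₁

theorem mem_and_mem_of_mul_mem_mul {c k : G} (hc : c ∈ C) (hk : k ∈ K)
    (h : c * k ∈ (C₁ : Set G) * K₁) : c ∈ C₁ ∧ k ∈ K₁ := by
  obtain ⟨c₁, hc₁, k₁, hk₁, e⟩ := h
  have := mul_injective_of_disjoint hCK
    (a₁ := (⟨c₁, hC₁ hc₁⟩, ⟨k₁, hK₁ hk₁⟩)) (a₂ := (⟨c, hc⟩, ⟨k, hk⟩)) e
  simp only [Prod.ext_iff, Subtype.ext_iff] at this
  exact this.1 ▸ this.2 ▸ ⟨hc₁, hk₁⟩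

variable {S : Subgroup G} (hS : (S : Set G) = C₁ * K₁)
include hS

theorem inf_left_eq_of_coe_eq_mul : S ⊓ C = C₁ := by
  ext c
  refine ⟨fun ⟨hcS, hc⟩ ↦ ?_, fun hc ↦ ⟨?_, hC₁ hc⟩⟩
  · refine (mem_and_mem_of_mul_mem_mul hCK hC₁ hK₁ hc K.one_mem ?_).1
    rwa [mul_one, ← hS]
  · show _ ∈ (S : Set G)
    rw [hS]
    exact ⟨c, hc, 1, K₁.one_mem, mul_one c⟩

theorem inf_right_eq_of_coe_eq_mul : S ⊓ K = K₁ := by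
  ext k
  refine ⟨fun ⟨hkS, hk⟩ ↦ ?_, fun hk ↦ ⟨?_, hK₁ hk⟩⟩
  · refine (mem_and_mem_of_mul_mem_mul hCK hC₁ hK₁ C.one_mem hk ?_).2
    rwa [one_mul, ← hS]
  · show _ ∈ (S : Set G)
    rw [hS]
    exact ⟨1, C₁.one_mem, k, hk, one_mul k⟩

theorem mem_of_conj_mem_of_coe_eq_mul [Finite G] [K.Normal]
    (hfree : ∀ c ∈ C, c ≠ 1 → ∀ k ∈ K, k ≠ 1 → c * k * c⁻¹ ≠ k) {s : G} (hsC : s ∈ C)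
    (hs1 : s ≠ 1) {k : G} (hk : k ∈ K) (h : k⁻¹ * s * k ∈ S) : k ∈ K₁ := by
  have hcommK : ⁅s⁻¹, k⁻¹⁆ ∈ K := by
    rw [commutatorElement_def]
    exact K.mul_mem (‹K.Normal›.conj_mem _ (K.inv_mem hk) _) (K.inv_mem (K.inv_mem hk))
  obtain ⟨hsC₁, hcomm⟩ := mem_and_mem_of_mul_mem_mul hCK hC₁ hK₁ hsC hcommK <| by
    have hconj : s * ⁅s⁻¹, k⁻¹⁆ = k⁻¹ * s * k := by
      rw [commutatorElement_def]
      group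
    rw [hconj, ← hS]
    exact h
  have hsS : s ∈ S := (inf_left_eq_of_coe_eq_mul hCK hC₁ hK₁ hS ▸ hsC₁ : s ∈ S ⊓ C).1
  have hfix : ∀ k ∈ K, s⁻¹ * k * s⁻¹⁻¹ = k → k = 1 := fun k hk hfix ↦
    not_not.mp fun hk1 ↦ hfree _ (C.inv_mem hsC) (inv_ne_one.mpr hs1) k hk hk1 hfix
  have hnorm : ∀ t ∈ K₁, s⁻¹ * t * s⁻¹⁻¹ ∈ K₁ := by
    intro t ht
    rw [← inf_right_eq_of_coe_eq_mul hCK hC₁ hK₁ hS] at ht ⊢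
    exact ⟨S.mul_mem (S.mul_mem (S.inv_mem hsS) ht.1) (S.inv_mem (S.inv_mem hsS)),
      ‹K.Normal›.conj_mem _ ht.2 _⟩
  simpa using mem_of_commutatorElement_mem hfix hnorm (K.inv_mem hk) hcomm

end Factorization

end Subgroup

theorem MulAction.stabilizer_smul_inf_eq {G α : Type*} [Group G] [MulAction G α]
    {C : Subgroup G} [IsMulCommutative C] {c : G} (hc : c ∈ C) (a : α) :
    stabilizer G (c • a) ⊓ C = stabilizer G a ⊓ C := by
  ext s
  simp only [Subgroup.mem_inf, mem_stabilizer_iff, and_congr_left_iff]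
  intro hs
  rw [← mul_smul, setLike_mul_comm hs hc, mul_smul, smul_left_cancel_iff]

theorem stmt5_general {F Δ : Type*} [Group F] [Finite F] [MulAction F Δ]
    (C K : Subgroup F) [K.Normal] (hCcyc : IsCyclic ↥C)
    (hdisj : C ⊓ K = ⊥) (hsup : C ⊔ K = ⊤)
    (hfrob : ∀ c ∈ C, c ≠ 1 → ∀ k ∈ K, k ≠ 1 → c * k * c⁻¹ ≠ k)
    (htrans : MulAction.IsPretransitive F Δ)
    (L : Δ) (C₁ K₁ : Subgroup F) (hC₁ : C₁ ≤ C) (hK₁ : K₁ ≤ K)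
    (hstab : (MulAction.stabilizer F L : Set F) = (C₁ : Set F) * (K₁ : Set F)) :
    (∀ c ∈ C, MulAction.stabilizer F (c • L) ⊓ C = C₁) ∧
    (∀ x : Δ, (∀ c ∈ C, c • L ≠ x) → MulAction.stabilizer F x ⊓ C = ⊥) := by
  have := hCcyc
  have hCK : Disjoint C K := disjoint_iff.mpr hdisj
  have hSC := Subgroup.inf_left_eq_of_coe_eq_mul hCK hC₁ hK₁ hstab
  have hSK := Subgroup.inf_right_eq_of_coe_eq_mul hCK hC₁ hK₁ hstab
  refine ⟨fun c hc ↦ by rw [stabilizer_smul_inf_eq hc, hSC], fun x hx ↦ ?_⟩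
  obtain ⟨g, rfl⟩ := htrans.exists_smul_eq L x
  obtain ⟨c, hc, k, hk, rfl⟩ : g ∈ (C : Set F) * K := by
    rw [← Subgroup.mul_normal, hsup]
    trivial
  rw [mul_smul, stabilizer_smul_inf_eq hc, eq_bot_iff]
  intro s hs
  obtain ⟨hs, hsC⟩ := Subgroup.mem_inf.mp hs
  rw [Subgroup.mem_bot]
  by_contra hs1
  rw [stabilizer_smul_eq_stabilizer_map_conj, Subgroup.mem_map_equiv] at hs
  have hkK₁ := Subgroup.mem_of_conj_mem_of_coe_eq_mul hCK hC₁ hK₁ hstab hfrob hsC hs1 hk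
    (by simpa using hs)
  have hkL : k ∈ stabilizer F L := (hSK ▸ hkK₁ : k ∈ _ ⊓ K).1
  exact hx c hc (by rw [mul_smul, mem_stabilizer_iff.mp hkL])

theorem stmt5 {F Δ : Type*} [Group F] [Finite F] [Finite Δ] [MulAction F Δ]
    (C K : Subgroup F) [K.Normal] (hCcyc : IsCyclic ↥C) (hKcyc : IsCyclic ↥K)
    (hCnt : C ≠ ⊥) (hKnt : K ≠ ⊥) (hdisj : C ⊓ K = ⊥) (hsup : C ⊔ K = ⊤)
    (hfrob : ∀ c ∈ C, c ≠ 1 → ∀ k ∈ K, k ≠ 1 → c * k * c⁻¹ ≠ k)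
    (htrans : MulAction.IsPretransitive F Δ)
    (L : Δ) (C₁ K₁ : Subgroup F) (hC₁ : C₁ ≤ C) (hK₁ : K₁ ≤ K)
    (hstab : (MulAction.stabilizer F L : Set F) = (C₁ : Set F) * (K₁ : Set F)) :
    (∀ c ∈ C, MulAction.stabilizer F (c • L) ⊓ C = C₁) ∧
    (∀ x : Δ, (∀ c ∈ C, c • L ≠ x) → MulAction.stabilizer F x ⊓ C = ⊥) :=
  stmt5_general C K hCcyc hdisj hsup hfrob htrans L C₁ K₁ hC₁ hK₁ hstab
end

section
/- Let S be a normal subgroup of a finite group G and let R be an r-subgroup of G for a prime r. If r does not divide |S| but another prime p divides |S|, then R normalizes some Sylow p-subgroup of S. -/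
/-!
Conjugation by `G` permutes the Sylow `p`-subgroups of the normal subgroup `S`. Their number
divides `|S|`, hence is prime to `r`, so the orbits of the `r`-group `R` cannot all have length
divisible by `r`: some Sylow `p`-subgroup of `S` is fixed by `R`, i.e. normalized by `R`.
-/

open Pointwise

namespace Subgroup

variable {G : Type*} [Group G] {N : Subgroup G} [N.Normal]

theorem map_subtype_conjNormal_smul (g : G) (Q : Subgroup N) :
    ((MulAut.conjNormal g : MulAut N) • Q).map N.subtype = MulAut.conj g • Q.map N.subtype := by
  change map N.subtype (map (MulAut.conjNormal g).toMonoidHom Q) =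
    map (MulAut.conj g).toMonoidHom (map N.subtype Q)
  rw [map_map, map_map]
  rfl

theorem mem_normalizer_map_subtype_iff {g : G} {Q : Subgroup N} :
    g ∈ normalizer (Q.map N.subtype : Set G) ↔ (MulAut.conjNormal g : MulAut N) • Q = Q := by
  rw [mem_normalizer_iff_map_conj_eq, ← (map_injective N.subtype_injective).eq_iff,
    map_subtype_conjNormal_smul]
  rfl

end Subgroup

theorem Sylow.card_dvd_card {p : ℕ} [Fact p.Prime] {G : Type*} [Group G] [Finite G] :
    Nat.card (Sylow p G) ∣ Nat.card G := by
  obtain ⟨P⟩ : Nonempty (Sylow p G) := inferInstance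
  exact P.card_dvd_index.trans (P : Subgroup G).index_dvd_card

theorem IsPGroup.exists_sylow_forall_smul_eq {r p : ℕ} [Fact r.Prime] [Fact p.Prime]
    {R N : Type*} [Group R] [Group N] [Finite N] (hR : IsPGroup r R)
    (hrN : ¬ r ∣ Nat.card N) (φ : R →* MulAut N) :
    ∃ P : Sylow p N, ∀ g, φ g • P = P := by
  let _ : MulAction R (Sylow p N) := MulAction.compHom _ φ
  obtain ⟨P, hP⟩ := hR.nonempty_fixed_point_of_prime_not_dvd_card (Sylow p N)
    fun h ↦ hrN (h.trans Sylow.card_dvd_card)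
  exact ⟨P, hP⟩

theorem stmt7_general {G : Type*} [Group G] [Finite G] (S : Subgroup G) [S.Normal]
    (r p : ℕ) (hr : r.Prime) (hp : p.Prime) (R : Subgroup G) (hR : IsPGroup r R)
    (hrS : ¬ r ∣ Nat.card S) :
    ∃ P : Subgroup G, P ≤ S ∧
      Nat.card P = p ^ ((Nat.card S).factorization p) ∧
      R ≤ Subgroup.normalizer (P : Set G) := by
  have : Fact p.Prime := ⟨hp⟩
  have : Fact r.Prime := ⟨hr⟩
  obtain ⟨Q, hQ⟩ :=
    hR.exists_sylow_forall_smul_eq (p := p) hrS (MulAut.conjNormal.comp R.subtype)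
  refine ⟨(Q : Subgroup S).map S.subtype, Subgroup.map_subtype_le _, ?_, fun g hg ↦ ?_⟩
  · rw [Subgroup.card_map_of_injective S.subtype_injective]
    exact Q.card_eq_multiplicity
  · exact Subgroup.mem_normalizer_map_subtype_iff.mpr (congrArg Sylow.toSubgroup (hQ ⟨g, hg⟩))

theorem stmt7 {G : Type*} [Group G] [Finite G] (S : Subgroup G) [S.Normal]
    (r p : ℕ) (hr : r.Prime) (hp : p.Prime) (R : Subgroup G) (hR : IsPGroup r R)
    (hrS : ¬ r ∣ Nat.card S) (hpS : p ∣ Nat.card S) :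
    ∃ P : Subgroup G, P ≤ S ∧
      Nat.card P = p ^ ((Nat.card S).factorization p) ∧
      R ≤ Subgroup.normalizer (P : Set G) :=
  stmt7_general S r p hr hp R hR hrS
end

section
/- Let F be a field and let A ∈ Mat_n(F) be a square matrix whose minimal polynomial g is irreducible of degree d. Then K = F[A] is a field extension of F of degree d, and for every A' ∈ K, det(A') = N^K_F(A')^(n/d), where N^K_F denotes the field norm from K to F. -/
/-!
Through `K = F[X]/(g) ≅ F[A]`, the space `Fⁿ` becomes a `K`-vector space of dimension `m` with
`d * m = n`, and `q(A)` is multiplication by `x = q mod g`. As a `K`-linear map its determinant is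
`x ^ m`, and restricting scalars to `F` turns a determinant into the norm of the `K`-determinant.
-/

open Module Polynomial

theorem LinearMap.det_algHom_apply_eq_norm_pow {F K V : Type*} [Field F] [Field K] [Algebra F K]
    [AddCommGroup V] [Module F V] (φ : K →ₐ[F] End F V) (x : K) :
    LinearMap.det (φ x) = Algebra.norm F x ^ (finrank F V / finrank F K) := by
  let _ : Module K V := Module.compHom V φ.toRingHom
  have : IsScalarTower F K V := ⟨fun a k v => by
    change φ (a • k) v = a • φ k v
    rw [map_smul, LinearMap.smul_apply]⟩
  have hφ : φ x = ((x • LinearMap.id : End K V).restrictScalars F) := rfl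
  rw [hφ, LinearMap.det_restrictScalars, LinearMap.det_smul, LinearMap.det_id, mul_one, map_pow]
  by_cases hK : Module.Finite F K
  · rw [← finrank_mul_finrank F K V, Nat.mul_div_cancel_left _ finrank_pos]
  · rw [Algebra.norm_eq_one_of_not_module_finite hK, one_pow, one_pow]

theorem stmt8 {F : Type*} [Field F] {n d : ℕ}
    (A : Matrix (Fin n) (Fin n) F)
    (hirr : Irreducible (minpoly F A)) (hd : (minpoly F A).natDegree = d) :
    IsField (AdjoinRoot (minpoly F A)) ∧
    Module.finrank F (AdjoinRoot (minpoly F A)) = d ∧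
    ∀ q : Polynomial F,
      (Polynomial.aeval A q).det
        = (Algebra.norm F (AdjoinRoot.mk (minpoly F A) q)) ^ (n / d) := by
  have : Fact (Irreducible (minpoly F A)) := ⟨hirr⟩
  have hrank : finrank F (AdjoinRoot (minpoly F A)) = d :=
    hd ▸ finrank_quotient_span_eq_natDegree
  refine ⟨Field.toIsField _, hrank, fun q => ?_⟩
  have hker : ∀ p ∈ Ideal.span {minpoly F A}, aeval A p = 0 := fun p hp => by
    obtain ⟨r, rfl⟩ := Ideal.mem_span_singleton'.mp hp
    rw [map_mul, minpoly.aeval, mul_zero]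
  let φ : AdjoinRoot (minpoly F A) →ₐ[F] End F (Fin n → F) :=
    Matrix.toLinAlgEquiv'.toAlgHom.comp (Ideal.Quotient.liftₐ _ (aeval A) hker)
  have hφ : φ (AdjoinRoot.mk _ q) = Matrix.toLin' (aeval A q) := rfl
  rw [← LinearMap.det_toLin', ← hφ, LinearMap.det_algHom_apply_eq_norm_pow, hrank,
    finrank_fin_fun]
end

section
/- Let G be a finite group with a normal subgroup A = Q₁ × ⋯ × Qₜ, where conjugation by G transitively permutes the factors Qᵢ. Let G₁ = N_G(Q₁), choose a representative ĝ_Z ∈ Z for each right coset Z of G₁ in G, and let U₁ be a subgroup of Q₁ that is G₁-intravariant in Q₁ (for every g ∈ G₁ there exists q ∈ Q₁ with U₁^g = U₁^q). Then U = ∏_Z U₁^{ĝ_Z} is a subgroup of A that is G-intravariant in A: for every g ∈ G there exists a ∈ A with U^g = U^a. Moreover, if U₁ is not normal in Q₁ then U is not normal in A. -/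
/-!
The conjugates `U₁^{ĝ_Z}` lie in the pairwise distinct, pairwise commuting, independent factors
`Q₁^{ĝ_Z}`. For `g ∈ G`, right multiplication by `g` permutes the cosets, and `ĝ_Z g = h ĝ_{Zg}`
with `h ∈ G₁`; intravariance of `U₁` replaces `h` by an element of `Q₁`, so `U₁^{ĝ_Z g}` is
`U₁^{ĝ_{Zg}}` conjugated by an element `b` of the factor `Q₁^{ĝ_{Zg}}`. The product of these
`b`'s over all cosets is an `a ∈ A` acting on each factor as its own `b`, hence `U^g = U^a`.
For the converse, independence and commutation give `U ∩ Q₁ = U₁^{ĝ_{G₁}}`, so if `Q₁`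
normalizes `U` it normalizes this `N_G(Q₁)`-conjugate of `U₁`, hence `U₁` itself.
-/

/-- Conjugation of a subgroup: `conjS g H = g H g⁻¹`. -/
def conjS {G : Type*} [Group G] (g : G) (H : Subgroup G) : Subgroup G :=
  H.map (MulAut.conj g).toMonoidHom

open Subgroup Function
open scoped Pointwise

section Conjugation

variable {G : Type*} [Group G]

lemma mem_conjS {g x : G} {H : Subgroup G} : x ∈ conjS g H ↔ g⁻¹ * x * g ∈ H := by
  rw [conjS, Subgroup.mem_map_equiv, MulAut.conj_symm_apply]

lemma conjS_mul (g h : G) (H : Subgroup G) : conjS (g * h) H = conjS g (conjS h H) := by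
  ext x
  simp only [mem_conjS, mul_inv_rev, mul_assoc]

@[simp] lemma conjS_one (H : Subgroup G) : conjS 1 H = H := by
  ext x
  simp [mem_conjS]

lemma conjS_mono (g : G) {H K : Subgroup G} (h : H ≤ K) : conjS g H ≤ conjS g K :=
  Subgroup.map_mono h

lemma conjS_iSup (g : G) {ι : Sort*} (S : ι → Subgroup G) :
    conjS g (⨆ i, S i) = ⨆ i, conjS g (S i) :=
  Subgroup.map_iSup _ _

lemma conjS_inf (g : G) (H K : Subgroup G) : conjS g (H ⊓ K) = conjS g H ⊓ conjS g K :=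
  Subgroup.map_inf H K _ (MulAut.conj g).injective

lemma conjS_eq_self_iff {g : G} {H : Subgroup G} : conjS g H = H ↔ g ∈ normalizer H :=
  mem_normalizer_iff_map_conj_eq.symm

lemma conjS_eq_self_of_mem_centralizer {g : G} {H : Subgroup G} (h : g ∈ centralizer H) :
    conjS g H = H :=
  conjS_eq_self_iff.2 (centralizer_le_normalizer _ h)

lemma forall_conjS_eq_self_of_conjS {K U : Subgroup G} {n : G} (hn : n ∈ normalizer K)
    (h : ∀ p ∈ K, conjS p (conjS n U) = conjS n U) : ∀ q ∈ K, conjS q U = U := by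
  intro q hq
  calc conjS q U = conjS n⁻¹ (conjS (n * q * n⁻¹) (conjS n U)) := by
        rw [← conjS_mul, ← conjS_mul]; congr 1; group
    _ = U := by
        rw [h _ ((mem_normalizer_iff.1 hn q).1 hq), ← conjS_mul, inv_mul_cancel, conjS_one]

end Conjugation

section CommutingFamily

variable {G : Type*} [Group G] {ι : Type*} {P S : ι → Subgroup G}

lemma exists_mem_iSup_conjS_eq [Finite ι] (hP : Pairwise fun i j => P i ≤ centralizer (P j))
    (hS : ∀ i, S i ≤ P i) {c : ι → G} (hc : ∀ i, c i ∈ P i) :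
    ∃ a ∈ ⨆ i, P i, ∀ i, conjS a (S i) = conjS (c i) (S i) := by
  classical
  have := Fintype.ofFinite ι
  have hcomm : ((Finset.univ : Finset ι) : Set ι).Pairwise (Commute on c) :=
    fun i _ j _ hij => (mem_centralizer_iff.1 (hP hij (hc i)) _ (hc j) : Commute (c j) (c i)).symm
  refine ⟨Finset.univ.noncommProd c hcomm,
    noncommProd_mem _ _ fun i _ => le_iSup P i (hc i), fun i => ?_⟩
  have hrest : (Finset.univ.erase i).noncommProd c (hcomm.mono (by simp)) ∈ centralizer (S i) :=
    noncommProd_mem _ _ fun j hj =>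
      centralizer_le (hS i) (hP (Finset.ne_of_mem_erase hj) (hc j))
  rw [← Finset.mul_noncommProd_erase _ (Finset.mem_univ i), conjS_mul,
    conjS_eq_self_of_mem_centralizer hrest]

lemma iSup_inf_eq_of_iSupIndep (hind : iSupIndep P)
    (hP : Pairwise fun i j => P i ≤ centralizer (P j)) (hS : ∀ i, S i ≤ P i) (i : ι) :
    (⨆ j, S j) ⊓ P i = S i := by
  set R := ⨆ j, ⨆ (_ : j ≠ i), P j
  have hRP : R ≤ centralizer (P i) := iSup₂_le fun j hj => hP hj
  have hSR : S i ≤ normalizer R :=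
    ((hS i).trans (le_centralizer_iff.1 hRP)).trans (centralizer_le_normalizer _)
  have hle : (⨆ j, S j) ≤ S i ⊔ R := iSup_le fun j => by
    by_cases hj : j = i
    · exact hj ▸ le_sup_left
    · exact ((hS j).trans (le_iSup₂ (f := fun j (_ : j ≠ i) => P j) j hj)).trans le_sup_right
  -- `S i ⊔ R = S i * R` as `S i` centralizes `R`; then Dedekind's law and `R ⊓ P i = ⊥`.
  refine le_antisymm (fun x hx => ?_) (le_inf (le_iSup S i) (hS i))
  have hx' : x ∈ (S i : Set G) * ((R ⊓ P i : Subgroup G) : Set G) := by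
    rw [mul_inf_assoc _ _ _ (hS i), ← coe_mul_of_left_le_normalizer_right _ _ hSR]
    exact ⟨hle hx.1, hx.2⟩
  rw [inf_comm, (hind i).eq_bot, coe_bot, Set.mul_singleton] at hx'
  simpa using hx'

end CommutingFamily

section RightCosets

variable {G : Type*} [Group G] (H : Subgroup G)

def rightCosetMulRight (g : G) :
    Quotient (QuotientGroup.rightRel H) ≃ Quotient (QuotientGroup.rightRel H) :=
  Quotient.congr (Equiv.mulRight g) fun x y => by
    simp only [QuotientGroup.rightRel_apply, Equiv.coe_mulRight, mul_inv_rev, mul_assoc,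
      mul_inv_cancel_left]

variable {H}

lemma rightCosetMulRight_mk (g x : G) :
    rightCosetMulRight H g (Quotient.mk'' x) = Quotient.mk'' (x * g) :=
  rfl

variable {rep : Quotient (QuotientGroup.rightRel H) → G}

lemma mul_inv_rep_mem (hrep : ∀ Z, Quotient.mk'' (rep Z) = Z) (x : G) :
    x * (rep (Quotient.mk'' x))⁻¹ ∈ H :=
  QuotientGroup.rightRel_apply.1 (Quotient.eq''.1 (hrep _))

end RightCosets

section ConjugatesByCosetRepresentatives

variable {G : Type*} [Group G] {K U₁ : Subgroup G}
  {rep : Quotient (QuotientGroup.rightRel (normalizer (K : Set G))) → G}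

lemma conjS_inv_rep_injective (hrep : ∀ Z, Quotient.mk'' (rep Z) = Z) :
    Injective fun Z => conjS (rep Z)⁻¹ K := by
  intro Z Z' h
  have hmem : rep Z' * (rep Z)⁻¹ ∈ normalizer (K : Set G) := by
    rw [← conjS_eq_self_iff, conjS_mul]
    simp only at h
    rw [h, ← conjS_mul, mul_inv_cancel, conjS_one]
  rw [← hrep Z, ← hrep Z', Quotient.eq'', QuotientGroup.rightRel_apply]
  exact hmem

lemma exists_conjS_inv_eq_conjS_conjS_rep (hrep : ∀ Z, Quotient.mk'' (rep Z) = Z)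
    (hintra : ∀ g ∈ normalizer (K : Set G), ∃ q ∈ K, conjS g⁻¹ U₁ = conjS q⁻¹ U₁) (x : G) :
    ∃ b ∈ conjS (rep (Quotient.mk'' x))⁻¹ K,
      conjS x⁻¹ U₁ = conjS b (conjS (rep (Quotient.mk'' x))⁻¹ U₁) := by
  set r := rep (Quotient.mk'' x)
  obtain ⟨q, hq, hqU⟩ := hintra _ (mul_inv_rep_mem hrep x)
  refine ⟨r⁻¹ * q⁻¹ * r, ?_, ?_⟩
  · rw [mem_conjS]
    simpa [mul_assoc] using inv_mem hq
  · calc conjS x⁻¹ U₁ = conjS r⁻¹ (conjS (x * r⁻¹)⁻¹ U₁) := by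
          rw [← conjS_mul]; congr 1; group
      _ = conjS (r⁻¹ * q⁻¹ * r) (conjS r⁻¹ U₁) := by
          rw [hqU, ← conjS_mul, ← conjS_mul]; congr 1; group

lemma forall_conjS_eq_self_of_conjS_iSup_conjS_rep (hrep : ∀ Z, Quotient.mk'' (rep Z) = Z)
    (hU₁ : U₁ ≤ K) (hind : iSupIndep fun Z => conjS (rep Z)⁻¹ K)
    (hP : Pairwise fun Z Z' => conjS (rep Z)⁻¹ K ≤ centralizer (conjS (rep Z')⁻¹ K))
    (hnorm : ∀ p ∈ K, conjS p (⨆ Z, conjS (rep Z)⁻¹ U₁) = ⨆ Z, conjS (rep Z)⁻¹ U₁) :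
    ∀ q ∈ K, conjS q U₁ = U₁ := by
  set Z₀ := (Quotient.mk'' 1 : Quotient (QuotientGroup.rightRel (normalizer (K : Set G))))
  have hn : (rep Z₀)⁻¹ ∈ normalizer (K : Set G) := by
    simpa using mul_inv_rep_mem hrep (1 : G)
  have hinf : (⨆ Z, conjS (rep Z)⁻¹ U₁) ⊓ K = conjS (rep Z₀)⁻¹ U₁ := by
    have := iSup_inf_eq_of_iSupIndep hind hP (fun Z => conjS_mono _ hU₁) Z₀
    rwa [conjS_eq_self_iff.2 hn] at this
  refine forall_conjS_eq_self_of_conjS hn fun p hp => ?_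
  rw [← hinf, conjS_inf, hnorm p hp, conjS_eq_self_iff.2 (le_normalizer hp)]

variable [Finite (Quotient (QuotientGroup.rightRel (normalizer (K : Set G))))]

lemma exists_conjS_inv_iSup_conjS_rep_eq (hrep : ∀ Z, Quotient.mk'' (rep Z) = Z)
    (hU₁ : U₁ ≤ K)
    (hintra : ∀ g ∈ normalizer (K : Set G), ∃ q ∈ K, conjS g⁻¹ U₁ = conjS q⁻¹ U₁)
    (hP : Pairwise fun Z Z' => conjS (rep Z)⁻¹ K ≤ centralizer (conjS (rep Z')⁻¹ K)) (g : G) :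
    ∃ a ∈ ⨆ Z, conjS (rep Z)⁻¹ K,
      conjS g⁻¹ (⨆ Z, conjS (rep Z)⁻¹ U₁) = conjS a⁻¹ (⨆ Z, conjS (rep Z)⁻¹ U₁) := by
  set ψ := rightCosetMulRight (normalizer (K : Set G)) g
  have hb : ∀ W, ∃ b ∈ conjS (rep W)⁻¹ K,
      conjS (rep (ψ.symm W) * g)⁻¹ U₁ = conjS b (conjS (rep W)⁻¹ U₁) := by
    intro W
    have hW : Quotient.mk'' (rep (ψ.symm W) * g) = W := by
      rw [← rightCosetMulRight_mk, hrep, Equiv.apply_symm_apply]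
    simpa only [hW] using exists_conjS_inv_eq_conjS_conjS_rep hrep hintra (rep (ψ.symm W) * g)
  choose b hbK hbU using hb
  obtain ⟨a, haK, ha⟩ := exists_mem_iSup_conjS_eq hP (fun Z => conjS_mono _ hU₁) hbK
  refine ⟨a⁻¹, inv_mem haK, ?_⟩
  calc conjS g⁻¹ (⨆ Z, conjS (rep Z)⁻¹ U₁) = ⨆ Z, conjS (rep Z * g)⁻¹ U₁ := by
        simp only [conjS_iSup, mul_inv_rev, conjS_mul]
    _ = ⨆ W, conjS (rep (ψ.symm W) * g)⁻¹ U₁ :=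
        (ψ.symm.iSup_comp (g := fun Z => conjS (rep Z * g)⁻¹ U₁)).symm
    _ = conjS a⁻¹⁻¹ (⨆ Z, conjS (rep Z)⁻¹ U₁) := by
        rw [inv_inv, conjS_iSup]
        exact iSup_congr fun W => (hbU W).trans (ha W).symm

end ConjugatesByCosetRepresentatives

theorem stmt13_general {G : Type*} [Group G] {t : ℕ} (ht : 0 < t)
    (Q : Fin t → Subgroup G) (A : Subgroup G)
    (hle : ∀ i, Q i ≤ A)
    (hind : iSupIndep Q)
    (hcomm : ∀ i j, i ≠ j → ∀ x ∈ Q i, ∀ y ∈ Q j, x * y = y * x)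
    (hperm : ∀ g : G, ∀ i, ∃ j, conjS g (Q i) = Q j)
    (U₁ : Subgroup G) (hU₁ : U₁ ≤ Q ⟨0, ht⟩)
    (hintra : ∀ g ∈ (Subgroup.normalizer (Q ⟨0, ht⟩ : Set G)),
      ∃ q ∈ Q ⟨0, ht⟩, conjS g⁻¹ U₁ = conjS q⁻¹ U₁)
    (rep : Quotient (QuotientGroup.rightRel (Subgroup.normalizer (Q ⟨0, ht⟩ : Set G))) → G)
    (hrep : ∀ Z, Quotient.mk'' (rep Z) = Z) :
    (⨆ Z, conjS (rep Z)⁻¹ U₁) ≤ A ∧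
    (∀ g : G, ∃ a ∈ A,
      conjS g⁻¹ (⨆ Z, conjS (rep Z)⁻¹ U₁) = conjS a⁻¹ (⨆ Z, conjS (rep Z)⁻¹ U₁)) ∧
    ((¬ ∀ q ∈ Q ⟨0, ht⟩, conjS q U₁ = U₁) →
      ¬ ∀ a ∈ A, conjS a (⨆ Z, conjS (rep Z)⁻¹ U₁) = ⨆ Z, conjS (rep Z)⁻¹ U₁) := by
  choose φ hφ using fun Z => hperm (rep Z)⁻¹ ⟨0, ht⟩
  have hPQ : (fun Z => conjS (rep Z)⁻¹ (Q ⟨0, ht⟩)) = Q ∘ φ := funext hφ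
  have hφinj : Injective φ := (hPQ ▸ conjS_inv_rep_injective hrep).of_comp
  have : Finite _ := Finite.of_injective φ hφinj
  have hQ : Pairwise fun i j => Q i ≤ centralizer (Q j) := fun i j hij x hx =>
    mem_centralizer_iff.2 fun y hy => hcomm j i (Ne.symm hij) y hy x hx
  have hP : Pairwise fun Z Z' =>
      conjS (rep Z)⁻¹ (Q ⟨0, ht⟩) ≤ centralizer (conjS (rep Z')⁻¹ (Q ⟨0, ht⟩)) := by
    simpa only [hφ] using hQ.comp_of_injective hφinj
  have hindP : iSupIndep fun Z => conjS (rep Z)⁻¹ (Q ⟨0, ht⟩) := hPQ ▸ hind.comp hφinj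
  have hPA : (⨆ Z, conjS (rep Z)⁻¹ (Q ⟨0, ht⟩)) ≤ A := iSup_le fun Z => hφ Z ▸ hle (φ Z)
  refine ⟨(iSup_mono fun Z => conjS_mono _ hU₁).trans hPA, fun g => ?_, fun hU₁ne hnorm => ?_⟩
  · obtain ⟨a, ha, hconj⟩ := exists_conjS_inv_iSup_conjS_rep_eq hrep hU₁ hintra hP g
    exact ⟨a, hPA ha, hconj⟩
  · exact hU₁ne (forall_conjS_eq_self_of_conjS_iSup_conjS_rep hrep hU₁ hindP hP
      fun p hp => hnorm p (hle _ hp))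

theorem stmt13 {G : Type*} [Group G] [Finite G] {t : ℕ} (ht : 0 < t)
    (Q : Fin t → Subgroup G) (A : Subgroup G) [A.Normal]
    (hle : ∀ i, Q i ≤ A) (hsupA : A = ⨆ i, Q i)
    (hind : iSupIndep Q)
    (hcomm : ∀ i j, i ≠ j → ∀ x ∈ Q i, ∀ y ∈ Q j, x * y = y * x)
    (hperm : ∀ g : G, ∀ i, ∃ j, conjS g (Q i) = Q j)
    (htrans : ∀ i j, ∃ g : G, conjS g (Q i) = Q j)
    (U₁ : Subgroup G) (hU₁ : U₁ ≤ Q ⟨0, ht⟩)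
    (hintra : ∀ g ∈ (Subgroup.normalizer (Q ⟨0, ht⟩ : Set G)),
      ∃ q ∈ Q ⟨0, ht⟩, conjS g⁻¹ U₁ = conjS q⁻¹ U₁)
    (rep : Quotient (QuotientGroup.rightRel (Subgroup.normalizer (Q ⟨0, ht⟩ : Set G))) → G)
    (hrep : ∀ Z, Quotient.mk'' (rep Z) = Z) :
    (⨆ Z, conjS (rep Z)⁻¹ U₁) ≤ A ∧
    (∀ g : G, ∃ a ∈ A,
      conjS g⁻¹ (⨆ Z, conjS (rep Z)⁻¹ U₁) = conjS a⁻¹ (⨆ Z, conjS (rep Z)⁻¹ U₁)) ∧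
    ((¬ ∀ q ∈ Q ⟨0, ht⟩, conjS q U₁ = U₁) →
      ¬ ∀ a ∈ A, conjS a (⨆ Z, conjS (rep Z)⁻¹ U₁) = ⨆ Z, conjS (rep Z)⁻¹ U₁) :=
  stmt13_general ht Q A hle hind hcomm hperm U₁ hU₁ hintra rep hrep
end

section
/- Let ρ₁ : F₁ → F₃ and ρ₂ : F₂ → F₃ be surjective homomorphisms of finite Frobenius groups, each Fᵢ having cyclic kernel Kᵢ and a fixed complement isomorphic to a common cyclic group C, such that ρ₁ and ρ₂ restrict to isomorphisms on the copies of C and map Kᵢ onto K₃. Then the fiber product F₁ ×_{F₃} F₂ contains a subgroup H which is a Frobenius group with complement the diagonal copy of C and cyclic kernel, such that the first projection maps H onto F₁. -/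
/-!
Write `K₁ = ⟨k₁⟩` and lift `ρ₁ k₁` to some `k₂ ∈ K₂` of minimal order; then every prime dividing
the order of `k₂` divides `n`, the order of `ρ₁ k₁`. The kernel is `K' = ⟨(k₁, k₂)⟩`.
An element `(c₁, c₂)` of the diagonal complement acts on `k₁` and on `k₂` by power maps with
exponents `a` and `b`, and `a ≡ b mod n` because both induce the action of `ρ₁ c₁` on `ρ₁ k₁`.
A Frobenius complement has order prime to its kernel, so modulo `d = gcd(|k₁|, |k₂|)` the
residues of `a` and `b` are roots of unity of order prime to `n`, while `n` is nilpotent mod `d`;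
this forces `a ≡ b mod d`, and the Chinese remainder theorem makes `(c₁, c₂)` act on `K'` by a
power map. Fixed-point-freeness holds componentwise, and the first projection maps the
subgroup onto `C₁ ⊔ K₁ = F₁`.
-/

/-- `F` is a Frobenius group with cyclic complement `C` and cyclic kernel `K`. -/
def IsFrobOf {F : Type*} [Group F] (C K : Subgroup F) : Prop :=
  K.Normal ∧ IsCyclic ↥K ∧ K ≠ ⊥ ∧ IsCyclic ↥C ∧ C ≠ ⊥ ∧
  C ⊓ K = ⊥ ∧ C ⊔ K = ⊤ ∧
  ∀ c ∈ C, c ≠ 1 → ∀ k ∈ K, k ≠ 1 → c * k * c⁻¹ ≠ k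

open Subgroup

theorem eq_of_pow_eq_one_of_dvd_sub {R : Type*} [CommRing R] {N M : ℕ}
    (hN : IsNilpotent (N : R)) (hNM : N.Coprime M) {u v : R} (hu : u ^ M = 1) (hv : v ^ M = 1)
    (huv : (N : R) ∣ u - v) : u = v := by
  obtain ⟨e, he⟩ := hN
  rcases M.eq_zero_or_pos with rfl | hM
  · rw [Nat.coprime_zero_right] at hNM
    subst hNM
    have := subsingleton_of_zero_eq_one (by simpa using he.symm : (0 : R) = 1)
    exact Subsingleton.elim u v
  have hvv : v ^ (M - 1) * v = 1 := by rw [← pow_succ, Nat.sub_add_cancel hM, hv]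
  -- `w = u / v` is `≡ 1 mod N`, so its order divides a power of `N` as well as `M`.
  set w := u * v ^ (M - 1)
  have hwM : w ^ M = 1 := by
    rw [mul_pow, hu, one_mul, ← pow_mul, mul_comm, pow_mul, hv, one_pow]
  have hwN : w ^ N ^ e = 1 := by
    have hw1 : (N : R) ∣ w - 1 := by
      rw [show w - 1 = (u - v) * v ^ (M - 1) by rw [sub_mul, mul_comm v, hvv]]
      exact dvd_mul_of_dvd_left huv _
    simpa [pow_succ, he, sub_eq_zero] using dvd_sub_pow_of_dvd_sub hw1 e
  have hw : w = 1 := (pow_eq_one_iff_of_coprime (hNM.symm.pow_right e)).mp ⟨hwM, hwN⟩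
  calc u = w * v := by rw [mul_assoc, hvv, mul_one]
    _ = v := by rw [hw, one_mul]

theorem Int.modEq_of_pow_modEq_one {a b : ℤ} {d N M e : ℕ} (hdN : d ∣ N ^ e)
    (hNM : N.Coprime M) (ha : a ^ M ≡ 1 [ZMOD d]) (hb : b ^ M ≡ 1 [ZMOD d])
    (hab : a ≡ b [ZMOD N]) : a ≡ b [ZMOD d] := by
  rw [← ZMod.intCast_eq_intCast_iff] at ha hb ⊢
  push_cast at ha hb
  obtain ⟨q, hq⟩ := hab.symm.dvd
  refine eq_of_pow_eq_one_of_dvd_sub ⟨e, ?_⟩ hNM ha hb ⟨q, ?_⟩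
  · exact_mod_cast (ZMod.natCast_eq_zero_iff _ _).mpr hdN
  · exact_mod_cast congrArg (Int.cast : ℤ → ZMod d) hq

theorem Prod.mk_zpow_mem_zpowers {G H : Type*} [Group G] [Group H] {x : G} {y : H} {a b : ℤ}
    (h : a ≡ b [ZMOD (orderOf x).gcd (orderOf y)]) : (x ^ a, y ^ b) ∈ zpowers (x, y) := by
  obtain ⟨q, hq⟩ := h.symm.dvd
  rw [Nat.gcd_eq_gcd_ab] at hq
  refine ⟨a - orderOf x * (orderOf x).gcdA (orderOf y) * q, Prod.ext ?_ ?_⟩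
  · exact zpow_eq_zpow_iff_modEq.mpr
      (Int.modEq_iff_dvd.mpr ⟨(orderOf x).gcdA (orderOf y) * q, by ring⟩)
  · exact zpow_eq_zpow_iff_modEq.mpr
      (Int.modEq_iff_dvd.mpr ⟨-((orderOf x).gcdB (orderOf y) * q), by linear_combination -hq⟩)

theorem pow_modEq_one_of_conj_eq_zpow {G : Type*} [Group G] {c x : G} {a : ℤ}
    (hx : c * x * c⁻¹ = x ^ a) {M : ℕ} (hc : c ^ M = 1) : a ^ M ≡ 1 [ZMOD orderOf x] := by
  have hiter (j : ℕ) : (MulAut.conj c ^ j) x = x ^ a ^ j := by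
    induction j with
    | zero => simp
    | succ j ih =>
      rw [pow_succ', MulAut.mul_apply, ih, map_zpow, MulAut.conj_apply, hx, ← zpow_mul, pow_succ']
  rw [← zpow_eq_zpow_iff_modEq, zpow_one, ← hiter, ← map_pow, hc, map_one, MulAut.one_apply]

theorem Subgroup.Normal.exists_conj_eq_zpow {F : Type*} [Group F] {K : Subgroup F}
    (hK : K.Normal) [IsCyclic K] (c : F) : ∃ a : ℤ, ∀ k ∈ K, c * k * c⁻¹ = k ^ a := by
  obtain ⟨a, ha⟩ := (MulAut.conjNormal c : MulAut K).toMonoidHom.map_cyclic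
  exact ⟨a, fun k hk => congrArg Subtype.val (ha ⟨k, hk⟩)⟩

theorem IsFrobOf.coprime_card {F : Type*} [Group F] [Finite F] {C K : Subgroup F}
    (h : IsFrobOf C K) : (Nat.card C).Coprime (Nat.card K) := by
  -- An element of order `p` in `C` generates a `p`-group acting by conjugation on `K` whose only
  -- fixed point is `1`, so `p ∤ |K|`.
  obtain ⟨hK, -, -, -, -, -, -, hfree⟩ := h
  refine Nat.coprime_of_dvd fun p hp hpC hpK => ?_
  have := Fact.mk hp
  obtain ⟨c, hc⟩ := exists_prime_orderOf_dvd_card' p hpC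
  have hP : IsPGroup p (zpowers (ConjAct.toConjAct (c : F))) :=
    .of_card (n := 1) (by rw [Nat.card_zpowers, MulEquiv.orderOf_eq, orderOf_coe, hc, pow_one])
  obtain ⟨k, hk, hk1⟩ := hP.exists_fixed_point_of_prime_dvd_card_of_fixed_point K hpK
    (a := 1) fun _ => smul_one _
  have hc1 : (c : F) ≠ 1 := by
    rw [ne_eq, ← orderOf_eq_one_iff, orderOf_coe, hc]; exact hp.one_lt.ne'
  refine hfree c c.2 hc1 k k.2 (by simpa [eq_comm] using hk1) ?_
  have := congrArg Subtype.val (hk ⟨_, mem_zpowers _⟩)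
  simpa [ConjAct.Subgroup.val_conj_smul, ConjAct.toConjAct_smul] using this

theorem MonoidHom.exists_preimage_primeFactors_orderOf_subset {G H : Type*} [Group G] [Group H]
    [Finite G] (f : G →* H) {S : Subgroup G} {h : H} (hh : h ∈ S.map f) :
    ∃ k ∈ S, f k = h ∧ (orderOf k).primeFactors ⊆ (orderOf h).primeFactors := by
  classical
  have hex : ∃ n, ∃ k ∈ S, f k = h ∧ orderOf k = n :=
    let ⟨k, hk, hfk⟩ := hh; ⟨_, k, hk, hfk, rfl⟩
  obtain ⟨k, hk, rfl, hkn⟩ := Nat.find_spec hex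
  refine ⟨k, hk, rfl, fun p hp => ?_⟩
  have hpk := Nat.dvd_of_mem_primeFactors hp
  have hp := Nat.prime_of_mem_primeFactors hp
  have hfk : orderOf (f k) ≠ 0 :=
    (Nat.pos_of_dvd_of_pos (orderOf_map_dvd f k) (orderOf_pos k)).ne'
  refine Nat.mem_primeFactors.mpr ⟨hp, by_contra fun hpf => ?_, hfk⟩
  -- Otherwise `k ^ p ^ φ(n)`, with `n` the order of `f k`, is a preimage of smaller order.
  set u := p ^ (orderOf (f k)).totient
  have hfu : f (k ^ u) = f k := by
    rw [map_pow, pow_eq_pow_iff_modEq.mpr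
      (Nat.ModEq.pow_totient (hp.coprime_iff_not_dvd.mpr hpf)), pow_one]
  have hlt : orderOf (k ^ u) < orderOf k := by
    rw [orderOf_pow]
    refine Nat.div_lt_self (orderOf_pos k) (lt_of_lt_of_le hp.one_lt (Nat.le_of_dvd
      (Nat.gcd_pos_of_pos_left _ (orderOf_pos k)) (Nat.dvd_gcd hpk (dvd_pow_self p ?_))))
    exact (Nat.totient_pos.mpr (Nat.pos_of_ne_zero hfk)).ne'
  exact (Nat.find_min' hex ⟨k ^ u, pow_mem hk u, hfu, rfl⟩).not_gt (hkn ▸ hlt)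

theorem Subgroup.prod_inf_prod {G H : Type*} [Group G] [Group H] (C₁ K₁ : Subgroup G)
    (C₂ K₂ : Subgroup H) : C₁.prod C₂ ⊓ K₁.prod K₂ = (C₁ ⊓ K₁).prod (C₂ ⊓ K₂) := by
  ext; simp only [mem_inf, mem_prod]; tauto

theorem Subgroup.le_normalizer_zpowers {G : Type*} [Group G] [Finite G] {H : Subgroup G} {x : G}
    (h : ∀ c ∈ H, c * x * c⁻¹ ∈ zpowers x) : H ≤ normalizer (zpowers x : Set G) := by
  refine fun c hc => mem_normalizer_fintype fun k hk => ?_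
  obtain ⟨i, rfl⟩ := mem_zpowers_iff.mp hk
  rw [← conj_zpow]
  exact zpow_mem (h c hc) i

section FiberProduct

variable {F₁ F₂ F₃ : Type*} [Group F₁] [Group F₂] [Group F₃] (ρ₁ : F₁ →* F₃) (ρ₂ : F₂ →* F₃)

def fiberProduct : Subgroup (F₁ × F₂) :=
  (ρ₁.comp (MonoidHom.fst F₁ F₂)).eqLocus (ρ₂.comp (MonoidHom.snd F₁ F₂))

variable {ρ₁ ρ₂}

theorem mem_fiberProduct {x : F₁ × F₂} : x ∈ fiberProduct ρ₁ ρ₂ ↔ ρ₁ x.1 = ρ₂ x.2 := Iff.rfl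

variable {C₁ K₁ : Subgroup F₁} {C₂ K₂ : Subgroup F₂}

theorem map_fst_prod_inf_fiberProduct (hC : C₁.map ρ₁ ≤ C₂.map ρ₂) :
    (C₁.prod C₂ ⊓ fiberProduct ρ₁ ρ₂).map (MonoidHom.fst F₁ F₂) = C₁ := by
  refine le_antisymm (map_le_iff_le_comap.mpr fun c hc => (mem_prod.mp (mem_inf.mp hc).1).1)
    fun c₁ hc₁ => ?_
  obtain ⟨c₂, hc₂, hρ⟩ := hC (mem_map_of_mem ρ₁ hc₁)
  exact ⟨(c₁, c₂), mem_inf.mpr ⟨mem_prod.mpr ⟨hc₁, hc₂⟩, hρ.symm⟩, rfl⟩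

theorem conj_ne_self_of_mem_prod_inf_fiberProduct (h₁ : IsFrobOf C₁ K₁) (h₂ : IsFrobOf C₂ K₂)
    (hC₁ : Set.InjOn ρ₁ C₁) (hC₂ : Set.InjOn ρ₂ C₂) {c : F₁ × F₂}
    (hc : c ∈ C₁.prod C₂ ⊓ fiberProduct ρ₁ ρ₂) (hc1 : c ≠ 1) {k : F₁ × F₂}
    (hk : k ∈ K₁.prod K₂) (hk1 : k ≠ 1) : c * k * c⁻¹ ≠ k := by
  obtain ⟨-, -, -, -, -, -, -, hfree₁⟩ := h₁
  obtain ⟨-, -, -, -, -, -, -, hfree₂⟩ := h₂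
  obtain ⟨⟨hc₁, hc₂⟩, hρ⟩ := mem_inf.mp hc
  rw [mem_fiberProduct] at hρ
  have hc_one : c.1 = 1 ↔ c.2 = 1 := by
    constructor <;> intro h
    · exact hC₂ hc₂ C₂.one_mem (by rw [← hρ, h, map_one, map_one])
    · exact hC₁ hc₁ C₁.one_mem (by rw [hρ, h, map_one, map_one])
  have hc₁ne : c.1 ≠ 1 := fun h => hc1 (Prod.ext h (hc_one.mp h))
  intro hck
  by_cases hk₁ : k.1 = 1
  · exact hfree₂ c.2 hc₂ (hc_one.not.mp hc₁ne) k.2 hk.2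
      (fun h => hk1 (Prod.ext hk₁ h)) (congrArg Prod.snd hck)
  · exact hfree₁ c.1 hc₁ hc₁ne k.1 hk.1 hk₁ (congrArg Prod.fst hck)

theorem conj_mem_zpowers_of_mem_prod_inf_fiberProduct [Finite F₁] [Finite F₂]
    (h₁ : IsFrobOf C₁ K₁) (h₂ : IsFrobOf C₂ K₂) {k₁ : F₁} {k₂ : F₂} (hk₁ : k₁ ∈ K₁)
    (hk₂ : k₂ ∈ K₂) (hk : ρ₁ k₁ = ρ₂ k₂)
    (hprimes : (orderOf k₂).primeFactors ⊆ (orderOf (ρ₂ k₂)).primeFactors)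
    {c : F₁ × F₂} (hc : c ∈ C₁.prod C₂ ⊓ fiberProduct ρ₁ ρ₂) :
    c * (k₁, k₂) * c⁻¹ ∈ zpowers (k₁, k₂) := by
  obtain ⟨⟨hc₁, hc₂⟩, hρ⟩ := mem_inf.mp hc
  rw [mem_fiberProduct] at hρ
  have := h₁.2.1
  have := h₂.2.1
  obtain ⟨a, ha⟩ := h₁.1.exists_conj_eq_zpow c.1
  obtain ⟨b, hb⟩ := h₂.1.exists_conj_eq_zpow c.2
  rw [show c * (k₁, k₂) * c⁻¹ = (k₁ ^ a, k₂ ^ b) from Prod.ext (ha k₁ hk₁) (hb k₂ hk₂)]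
  refine Prod.mk_zpow_mem_zpowers ?_
  have hn₁ : orderOf (ρ₂ k₂) ∣ Nat.card K₁ :=
    hk ▸ (orderOf_map_dvd ρ₁ k₁).trans (K₁.orderOf_dvd_natCard hk₁)
  have hn₂ : orderOf (ρ₂ k₂) ∣ Nat.card K₂ :=
    (orderOf_map_dvd ρ₂ k₂).trans (K₂.orderOf_dvd_natCard hk₂)
  set M := Nat.card C₁ * Nat.card C₂
  have hnM : (orderOf (ρ₂ k₂)).Coprime M := .mul_right
    (h₁.coprime_card.symm.coprime_dvd_left hn₁) (h₂.coprime_card.symm.coprime_dvd_left hn₂)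
  have hab : a ≡ b [ZMOD orderOf (ρ₂ k₂)] := by
    rw [← zpow_eq_zpow_iff_modEq]
    calc ρ₂ k₂ ^ a = ρ₁ (c.1 * k₁ * c.1⁻¹) := by rw [ha k₁ hk₁, map_zpow, hk]
      _ = ρ₂ (c.2 * k₂ * c.2⁻¹) := by simp only [map_mul, map_inv, hk, hρ]
      _ = ρ₂ k₂ ^ b := by rw [hb k₂ hk₂, map_zpow]
  have hc₁M : c.1 ^ M = 1 := orderOf_dvd_iff_pow_eq_one.mp
    ((C₁.orderOf_dvd_natCard hc₁).trans (dvd_mul_right _ _))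
  have hc₂M : c.2 ^ M = 1 := orderOf_dvd_iff_pow_eq_one.mp
    ((C₂.orderOf_dvd_natCard hc₂).trans (dvd_mul_left _ _))
  refine Int.modEq_of_pow_modEq_one (e := orderOf k₂) ?_ hnM
    ((pow_modEq_one_of_conj_eq_zpow (ha k₁ hk₁) hc₁M).of_dvd ?_)
    ((pow_modEq_one_of_conj_eq_zpow (hb k₂ hk₂) hc₂M).of_dvd ?_) hab
  · exact (Nat.gcd_dvd_right _ _).trans
      ((Nat.dvd_pow_self_iff (orderOf_pos k₂).ne'
        (Nat.pos_of_dvd_of_pos (orderOf_map_dvd ρ₂ k₂) (orderOf_pos k₂)).ne').mpr hprimes)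
  · exact Int.natCast_dvd_natCast.mpr (Nat.gcd_dvd_left _ _)
  · exact Int.natCast_dvd_natCast.mpr (Nat.gcd_dvd_right _ _)

end FiberProduct

theorem stmt14_general {F₁ F₂ F₃ : Type*} [Group F₁] [Group F₂] [Group F₃]
    [Finite F₁] [Finite F₂]
    (C₁ K₁ : Subgroup F₁) (C₂ K₂ : Subgroup F₂) (C₃ K₃ : Subgroup F₃)
    (h₁ : IsFrobOf C₁ K₁) (h₂ : IsFrobOf C₂ K₂)
    (ρ₁ : F₁ →* F₃) (ρ₂ : F₂ →* F₃)
    (hC₁ : C₁.map ρ₁ = C₃) (hC₁inj : Set.InjOn ρ₁ (C₁ : Set F₁))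
    (hC₂ : C₂.map ρ₂ = C₃) (hC₂inj : Set.InjOn ρ₂ (C₂ : Set F₂))
    (hK₁ : K₁.map ρ₁ = K₃) (hK₂ : K₂.map ρ₂ = K₃) :
    ∃ K' : Subgroup (F₁ × F₂),
      K' ≤ (ρ₁.comp (MonoidHom.fst F₁ F₂)).eqLocus (ρ₂.comp (MonoidHom.snd F₁ F₂)) ∧
      IsCyclic ↥K' ∧ K' ≠ ⊥ ∧
      ((C₁.prod C₂ ⊓
          (ρ₁.comp (MonoidHom.fst F₁ F₂)).eqLocus (ρ₂.comp (MonoidHom.snd F₁ F₂)))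
        ⊓ K' = ⊥) ∧
      (∀ h ∈ (C₁.prod C₂ ⊓
          (ρ₁.comp (MonoidHom.fst F₁ F₂)).eqLocus (ρ₂.comp (MonoidHom.snd F₁ F₂)))
          ⊔ K', ∀ k ∈ K', h * k * h⁻¹ ∈ K') ∧
      (∀ c ∈ C₁.prod C₂ ⊓
          (ρ₁.comp (MonoidHom.fst F₁ F₂)).eqLocus (ρ₂.comp (MonoidHom.snd F₁ F₂)),
        c ≠ 1 → ∀ k ∈ K', k ≠ 1 → c * k * c⁻¹ ≠ k) ∧
      ((C₁.prod C₂ ⊓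
          (ρ₁.comp (MonoidHom.fst F₁ F₂)).eqLocus (ρ₂.comp (MonoidHom.snd F₁ F₂)))
          ⊔ K').map (MonoidHom.fst F₁ F₂) = ⊤ := by
  rw [← fiberProduct.eq_1]
  have ⟨_, hK₁cyc, hK₁ne, _, _, hCK₁, hCK₁top, _⟩ := h₁
  have ⟨_, _, _, _, _, hCK₂, _, _⟩ := h₂
  obtain ⟨k₁, rfl⟩ := (Subgroup.isCyclic_iff_exists_zpowers_eq_top K₁).mp hK₁cyc
  obtain ⟨k₂, hk₂, hk, hprimes⟩ := ρ₂.exists_preimage_primeFactors_orderOf_subset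
    (h := ρ₁ k₁) (hK₂.trans hK₁.symm ▸ mem_map_of_mem ρ₁ (mem_zpowers k₁))
  rw [← hk] at hprimes
  have hK' : zpowers (k₁, k₂) ≤ (zpowers k₁).prod K₂ :=
    zpowers_le.mpr (mem_prod.mpr ⟨mem_zpowers k₁, hk₂⟩)
  refine ⟨zpowers (k₁, k₂), zpowers_le.mpr hk.symm, inferInstance, ?_, ?_, ?_, ?_, ?_⟩
  · exact zpowers_ne_bot.mpr fun h => hK₁ne (zpowers_eq_bot.mpr (congrArg Prod.fst h))
  · refine eq_bot_mono (inf_le_inf inf_le_left hK') ?_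
    rw [prod_inf_prod, hCK₁, hCK₂, bot_prod_bot]
  · have hD := le_normalizer_zpowers fun c hc =>
      conj_mem_zpowers_of_mem_prod_inf_fiberProduct h₁ h₂ (mem_zpowers k₁) hk₂ hk.symm hprimes hc
    exact fun h hh k hk => (mem_normalizer_iff.mp (sup_le hD le_normalizer hh) k).mp hk
  · exact fun c hc hc1 k hk hk1 => conj_ne_self_of_mem_prod_inf_fiberProduct h₁ h₂ hC₁inj hC₂inj
      hc hc1 (hK' hk) hk1
  · rw [Subgroup.map_sup, map_fst_prod_inf_fiberProduct (hC₁.trans hC₂.symm).le,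
      MonoidHom.map_zpowers]
    exact hCK₁top

theorem stmt14 {F₁ F₂ F₃ : Type*} [Group F₁] [Group F₂] [Group F₃]
    [Finite F₁] [Finite F₂] [Finite F₃]
    (C₁ K₁ : Subgroup F₁) (C₂ K₂ : Subgroup F₂) (C₃ K₃ : Subgroup F₃)
    (h₁ : IsFrobOf C₁ K₁) (h₂ : IsFrobOf C₂ K₂) (h₃ : IsFrobOf C₃ K₃)
    (ρ₁ : F₁ →* F₃) (ρ₂ : F₂ →* F₃)
    (hρ₁ : Function.Surjective ρ₁) (hρ₂ : Function.Surjective ρ₂)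
    (hC₁ : C₁.map ρ₁ = C₃) (hC₁inj : Set.InjOn ρ₁ (C₁ : Set F₁))
    (hC₂ : C₂.map ρ₂ = C₃) (hC₂inj : Set.InjOn ρ₂ (C₂ : Set F₂))
    (hK₁ : K₁.map ρ₁ = K₃) (hK₂ : K₂.map ρ₂ = K₃) :
    ∃ K' : Subgroup (F₁ × F₂),
      K' ≤ (ρ₁.comp (MonoidHom.fst F₁ F₂)).eqLocus (ρ₂.comp (MonoidHom.snd F₁ F₂)) ∧
      IsCyclic ↥K' ∧ K' ≠ ⊥ ∧
      ((C₁.prod C₂ ⊓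
          (ρ₁.comp (MonoidHom.fst F₁ F₂)).eqLocus (ρ₂.comp (MonoidHom.snd F₁ F₂)))
        ⊓ K' = ⊥) ∧
      (∀ h ∈ (C₁.prod C₂ ⊓
          (ρ₁.comp (MonoidHom.fst F₁ F₂)).eqLocus (ρ₂.comp (MonoidHom.snd F₁ F₂)))
          ⊔ K', ∀ k ∈ K', h * k * h⁻¹ ∈ K') ∧
      (∀ c ∈ C₁.prod C₂ ⊓
          (ρ₁.comp (MonoidHom.fst F₁ F₂)).eqLocus (ρ₂.comp (MonoidHom.snd F₁ F₂)),
        c ≠ 1 → ∀ k ∈ K', k ≠ 1 → c * k * c⁻¹ ≠ k) ∧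
      ((C₁.prod C₂ ⊓
          (ρ₁.comp (MonoidHom.fst F₁ F₂)).eqLocus (ρ₂.comp (MonoidHom.snd F₁ F₂)))
          ⊔ K').map (MonoidHom.fst F₁ F₂) = ⊤ :=
  stmt14_general C₁ K₁ C₂ K₂ C₃ K₃ h₁ h₂ ρ₁ ρ₂ hC₁ hC₁inj hC₂ hC₂inj hK₁ hK₂
end
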